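/- arXiv:1310.8371 — 4 statements merged into one kernel-verified Lean document; each statement's English description precedes it below -/
import Mathlib

section
/- Let V be a highest weight module over the Neveu–Schwarz algebra with highest weight vector u of highest weight (c, h), decomposed as V = ⨁_{n ∈ ℕ} V_{h−n/2} as in the grading assumption, and take (a, b) = (1/2, 1/2). Then the subspace of the shifted module V ⊗ ℂ[t^{±1/2}] spanned by all vectors v ⊗ t^{d−1/2} with v ∈ V_{h+d} (d ∈ {0, −1/2, −1, −3/2, …}) is a submodule, and the linear map sending v ∈ V_{h+d} to v ⊗ t^{d−1/2} is an isomorphism of Neveu–Schwarz modules from V onto this submodule. -/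
noncomputable section

open Submodule

/-- The underlying data of a `ℤ/2`-graded complex vector space equipped with
operators `L m` (`m ∈ ℤ`) and `G k` (`k ∈ ℤ`, where `G k` represents the
operator `G_{k+1/2}` indexed by the half-integer `k + 1/2`). -/
structure PreNSMod where
  carrier : Type
  [acg : AddCommGroup carrier]
  [mod : Module ℂ carrier]
  even : Submodule ℂ carrier
  odd : Submodule ℂ carrier
  compl : IsCompl even odd
  L : ℤ → carrier →ₗ[ℂ] carrier
  G : ℤ → carrier →ₗ[ℂ] carrier

attribute [instance] PreNSMod.acg PreNSMod.mod

/-- A Neveu–Schwarz module of central charge `c`. -/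
structure NSMod (c : ℂ) extends PreNSMod where
  mapsL_even : ∀ (m : ℤ), ∀ v ∈ even, L m v ∈ even
  mapsL_odd : ∀ (m : ℤ), ∀ v ∈ odd, L m v ∈ odd
  mapsG_even : ∀ (k : ℤ), ∀ v ∈ even, G k v ∈ odd
  mapsG_odd : ∀ (k : ℤ), ∀ v ∈ odd, G k v ∈ even
  rel_LL : ∀ (m n : ℤ) (v : carrier),
    L m (L n v) - L n (L m v)
      = ((n : ℂ) - (m : ℂ)) • L (m + n) v
        + (if m + n = 0 then (((m : ℂ) ^ 3 - (m : ℂ)) / 12) * c else 0) • v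
  rel_LG : ∀ (m k : ℤ) (v : carrier),
    L m (G k v) - G k (L m v) = (((k : ℂ) + 1 / 2) - (m : ℂ) / 2) • G (m + k) v
  rel_GG : ∀ (k l : ℤ) (v : carrier),
    G k (G l v) + G l (G k v)
      = (2 : ℂ) • L (k + l + 1) v
        - (if k + l + 1 = 0 then (1 / 3) * (((k : ℂ) + 1 / 2) ^ 2 - 1 / 4) * c else 0) • v

/-- A submodule (invariant subspace) of a Neveu–Schwarz module. -/
def NSMod.IsSubmodule {c : ℂ} (S : NSMod c) (W : Submodule ℂ S.carrier) : Prop :=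
  (∀ (m : ℤ), ∀ v ∈ W, S.L m v ∈ W) ∧ (∀ (k : ℤ), ∀ v ∈ W, S.G k v ∈ W)

/-- Simplicity (irreducibility) of a Neveu–Schwarz module. -/
def NSMod.IsSimple {c : ℂ} (S : NSMod c) : Prop :=
  (∃ v : S.carrier, v ≠ 0) ∧
    ∀ W : Submodule ℂ S.carrier, S.IsSubmodule W → W = ⊥ ∨ W = ⊤

/-- `W` is a nonzero submodule which is simple as a module (it has no invariant
subspaces other than `⊥` and itself). -/
def NSMod.IsSimpleSubmodule {c : ℂ} (S : NSMod c) (W : Submodule ℂ S.carrier) : Prop :=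
  S.IsSubmodule W ∧ W ≠ ⊥ ∧
    ∀ W' : Submodule ℂ S.carrier, S.IsSubmodule W' → W' ≤ W → W' = ⊥ ∨ W' = W

/-- A homomorphism of Neveu–Schwarz modules: a linear map commuting with all
the operators `L m` and `G k`. -/
structure NSHom {c c' : ℂ} (S : NSMod c) (T : NSMod c') where
  toFun : S.carrier →ₗ[ℂ] T.carrier
  commL : ∀ (m : ℤ) (v : S.carrier), toFun (S.L m v) = T.L m (toFun v)
  commG : ∀ (k : ℤ) (v : S.carrier), toFun (S.G k v) = T.G k (toFun v)

/-- Two Neveu–Schwarz modules are isomorphic if there is a bijective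
homomorphism between them. -/
def NSIso {c c' : ℂ} (S : NSMod c) (T : NSMod c') : Prop :=
  ∃ f : NSHom S T, Function.Bijective f.toFun

/-- A realization of the intermediate series module `SA_{a,b}` inside a
Neveu–Schwarz module `S` of central charge `0`: a basis `x j` (`j ∈ ℤ`, even)
and `y j` (`j ∈ ℤ`, representing `y_{j+1/2}`, odd) on which the operators act
by the defining formulas of `SA_{a,b}`. -/
structure SAFamily (a b : ℂ) (S : NSMod 0) where
  x : ℤ → S.carrier
  y : ℤ → S.carrier
  x_even : ∀ j : ℤ, x j ∈ S.even
  y_odd : ∀ j : ℤ, y j ∈ S.odd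
  indep : LinearIndependent ℂ (Sum.elim x y)
  spans : Submodule.span ℂ (Set.range x ∪ Set.range y) = ⊤
  act_Lx : ∀ i j : ℤ, S.L i (x j) = (a + (j : ℂ) + (i : ℂ) * b) • x (i + j)
  act_Ly : ∀ i j : ℤ,
    S.L i (y j) = (a + 1 / 2 + (j : ℂ) + (i : ℂ) * (b - 1 / 2)) • y (i + j)
  act_Gx : ∀ i j : ℤ, S.G i (x j) = y (i + j)
  act_Gy : ∀ i j : ℤ,
    S.G i (y j) = (a + 1 / 2 + (j : ℂ) + (2 * (i : ℂ) + 1) * (b - 1 / 2)) • x (i + j + 1)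

/-- A realization of the intermediate series module `SA'_{a,b}` (for
`0 ≤ Re a < 1`, `b ≠ 1`) inside a Neveu–Schwarz module `S` of central
charge `0`.  For `(a,b) ≠ (1/2,1/2)` this is `SA_{a,b}` itself; for
`(a,b) = (1/2,1/2)` it is the quotient `SA_{1/2,1/2}/ℂ·y_{-1/2}`, in which
the image of `y_{-1/2}` (here `y (-1)`) is zero and the remaining vectors
form a basis.  The action formulas hold verbatim in both cases. -/
structure SA'Family (a b : ℂ) (S : NSMod 0) where
  x : ℤ → S.carrier
  y : ℤ → S.carrier
  x_even : ∀ j : ℤ, x j ∈ S.even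
  y_odd : ∀ j : ℤ, y j ∈ S.odd
  spans : Submodule.span ℂ (Set.range x ∪ Set.range y) = ⊤
  indep_special : a = 1 / 2 ∧ b = 1 / 2 →
    y (-1) = 0 ∧
      LinearIndependent ℂ (Sum.elim x (fun j : {j : ℤ // j ≠ -1} => y j.1))
  indep_generic : ¬(a = 1 / 2 ∧ b = 1 / 2) → LinearIndependent ℂ (Sum.elim x y)
  act_Lx : ∀ i j : ℤ, S.L i (x j) = (a + (j : ℂ) + (i : ℂ) * b) • x (i + j)
  act_Ly : ∀ i j : ℤ,
    S.L i (y j) = (a + 1 / 2 + (j : ℂ) + (i : ℂ) * (b - 1 / 2)) • y (i + j)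
  act_Gx : ∀ i j : ℤ, S.G i (x j) = y (i + j)
  act_Gy : ∀ i j : ℤ,
    S.G i (y j) = (a + 1 / 2 + (j : ℂ) + (2 * (i : ℂ) + 1) * (b - 1 / 2)) • x (i + j + 1)

/-- `u` is a highest weight vector of weight `(c,h)` generating the
Neveu–Schwarz module `S` (of central charge `c`). -/
structure IsHW {c : ℂ} (h : ℂ) (S : NSMod c) (u : S.carrier) : Prop where
  ne_zero : u ≠ 0
  mem_even : u ∈ S.even
  hw0 : S.L 0 u = h • u
  hwL : ∀ n : ℤ, 1 ≤ n → S.L n u = 0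
  hwG : ∀ k : ℤ, 0 ≤ k → S.G k u = 0
  gen : ∀ W : Submodule ℂ S.carrier, S.IsSubmodule W → u ∈ W → W = ⊤

/-- A realization of the tensor product Neveu–Schwarz module `V ⊗ S` (with
`V` of central charge `c` and `S` of central charge `0`) as a Neveu–Schwarz
module `T` of central charge `c`, via the bilinear map `t`. -/
structure TensorWitness {c : ℂ} (V : NSMod c) (S : NSMod 0) (T : NSMod c) where
  t : V.carrier →ₗ[ℂ] S.carrier →ₗ[ℂ] T.carrier
  isTensor : IsTensorProduct t
  grade_ee : ∀ v ∈ V.even, ∀ w ∈ S.even, t v w ∈ T.even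
  grade_oo : ∀ v ∈ V.odd, ∀ w ∈ S.odd, t v w ∈ T.even
  grade_eo : ∀ v ∈ V.even, ∀ w ∈ S.odd, t v w ∈ T.odd
  grade_oe : ∀ v ∈ V.odd, ∀ w ∈ S.even, t v w ∈ T.odd
  actL : ∀ (m : ℤ) (v : V.carrier) (w : S.carrier),
    T.L m (t v w) = t (V.L m v) w + t v (S.L m w)
  actG_even : ∀ (k : ℤ), ∀ v ∈ V.even, ∀ w : S.carrier,
    T.G k (t v w) = t (V.G k v) w + t v (S.G k w)
  actG_odd : ∀ (k : ℤ), ∀ v ∈ V.odd, ∀ w : S.carrier,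
    T.G k (t v w) = t (V.G k v) w - t v (S.G k w)

/-- The PBW monomial `L_{-n₁} ⋯ L_{-n_p} G_{-r₁} ⋯ G_{-r_q} u`, where the
second list records each half-integer `r = k - 1/2` by the integer `k`
(so that `G_{-r}` is the operator `G (-k)`). -/
def vermaMonomial {c : ℂ} (M : NSMod c) (u : M.carrier) (p : List ℤ × List ℤ) :
    M.carrier :=
  (p.1.map fun n => M.L (-n)).foldr (fun f v => f v)
    ((p.2.map fun k => M.G (-k)).foldr (fun f v => f v) u)

/-- The index set for the PBW basis of a Verma module: weakly decreasing lists
of positive integers `n₁ ≥ ⋯ ≥ n_p ≥ 1`, together with strictly decreasing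
lists of positive half-integers `r₁ > ⋯ > r_q > 0` (with `r = k - 1/2`
recorded by the integer `k ≥ 1`). -/
def VermaIndex : Type :=
  {p : List ℤ × List ℤ //
    p.1.Chain' (· ≥ ·) ∧ (∀ n ∈ p.1, 1 ≤ n) ∧
      p.2.Chain' (· > ·) ∧ (∀ k ∈ p.2, 1 ≤ k)}

/-- `M` is the Verma module of highest weight `(c,h)` with highest weight
vector `u`: the PBW monomials in the negative-mode operators applied to `u`
form a basis of `M`. -/
def IsVerma {c : ℂ} (h : ℂ) (M : NSMod c) (u : M.carrier) : Prop :=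
  IsHW h M u ∧
    LinearIndependent ℂ (fun p : VermaIndex => vermaMonomial M u p.1) ∧
    Submodule.span ℂ (Set.range fun p : VermaIndex => vermaMonomial M u p.1) = ⊤

/-- The grading assumption on a highest weight module `V` of highest weight
`(c,h)`: `V = ⨁_{n ∈ ℕ} V_{h-n/2}` where `D n = V_{h-n/2}` is the
`L₀`-eigenspace with eigenvalue `h - n/2`, contained in the even part for
`n` even and the odd part for `n` odd, and `u ∈ D 0`. -/
structure GradedHW {c : ℂ} (h : ℂ) (V : NSMod c) (u : V.carrier)
    (D : ℕ → Submodule ℂ V.carrier) : Prop where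
  hw : IsHW h V u
  u_mem : u ∈ D 0
  internal : DirectSum.IsInternal D
  eig : ∀ (n : ℕ), ∀ v ∈ D n, V.L 0 v = (h - (n : ℂ) / 2) • v
  even_part : ∀ n : ℕ, Even n → D n ≤ V.even
  odd_part : ∀ n : ℕ, Odd n → D n ≤ V.odd

/-- A realization of the shifted module `V ⊗ ℂ[t^{±1/2}]` on the graded
vector space `Sh`.  Here `ι p v` represents `v ⊗ t^{p/2}` (half-integers
`s ∈ (1/2)ℤ` are recorded by integers `p` with `s = p/2`), and `D n` is the
weight space `V_{h - n/2}` (so `d = -n/2`).  The case distinction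
`s + d ∈ ℤ` versus `s + d ∈ ℤ + 1/2` becomes `2 ∣ (p - n)` versus its
negation. -/
structure ShiftedWitness (a b : ℂ) {c : ℂ} (V : NSMod c)
    (D : ℕ → Submodule ℂ V.carrier) (Sh : PreNSMod) where
  ι : ℤ → V.carrier →ₗ[ℂ] Sh.carrier
  directSum : Function.Bijective
    (Finsupp.lsum ℂ ι : (ℤ →₀ V.carrier) →ₗ[ℂ] Sh.carrier)
  grade_even : ∀ p : ℤ, (2 : ℤ) ∣ p → ∀ v : V.carrier, ι p v ∈ Sh.even
  grade_odd : ∀ p : ℤ, ¬(2 : ℤ) ∣ p → ∀ v : V.carrier, ι p v ∈ Sh.odd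
  actL : ∀ (k p : ℤ) (n : ℕ), ∀ v ∈ D n,
    Sh.L k (ι p v) = ι (p + 2 * k) (V.L k v)
      + (if (2 : ℤ) ∣ (p - (n : ℤ))
          then a + (p : ℂ) / 2 + (k : ℂ) * b + (n : ℂ) / 2
          else a + (p : ℂ) / 2 + (k : ℂ) * (b - 1 / 2) + (n : ℂ) / 2) •
            ι (p + 2 * k) v
  actG : ∀ (k p : ℤ) (n : ℕ), ∀ v ∈ D n,
    Sh.G k (ι p v) = ι (p + 2 * k + 1) (V.G k v)
      + ((-1 : ℂ) ^ n *
          (if (2 : ℤ) ∣ (p - (n : ℤ)) then 1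
            else a + (p : ℂ) / 2 + (2 * (k : ℂ) + 1) * (b - 1 / 2) + (n : ℂ) / 2)) •
            ι (p + 2 * k + 1) v

/-- A realization of the *reduced* shifted module: the quotient of the
shifted module `V ⊗ ℂ[t^{±1/2}]` by the copy of `V` spanned by the vectors
`v ⊗ t^{d - 1/2}` (`v ∈ V_{h+d}`) when `(a,b) = (1/2,1/2)`, and the shifted
module itself otherwise. -/
structure RedShiftedWitness (a b : ℂ) {c : ℂ} (V : NSMod c)
    (D : ℕ → Submodule ℂ V.carrier) (R : NSMod c) where
  ι : ℤ → V.carrier →ₗ[ℂ] R.carrier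
  surj : Function.Surjective
    (Finsupp.lsum ℂ ι : (ℤ →₀ V.carrier) →ₗ[ℂ] R.carrier)
  ker_special : a = 1 / 2 ∧ b = 1 / 2 →
    LinearMap.ker (Finsupp.lsum ℂ ι : (ℤ →₀ V.carrier) →ₗ[ℂ] R.carrier)
      = Submodule.span ℂ
          {w : ℤ →₀ V.carrier | ∃ n : ℕ, ∃ v ∈ D n, w = Finsupp.single (-(n : ℤ) - 1) v}
  ker_generic : ¬(a = 1 / 2 ∧ b = 1 / 2) →
    LinearMap.ker (Finsupp.lsum ℂ ι : (ℤ →₀ V.carrier) →ₗ[ℂ] R.carrier) = ⊥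
  grade_even : ∀ p : ℤ, (2 : ℤ) ∣ p → ∀ v : V.carrier, ι p v ∈ R.even
  grade_odd : ∀ p : ℤ, ¬(2 : ℤ) ∣ p → ∀ v : V.carrier, ι p v ∈ R.odd
  actL : ∀ (k p : ℤ) (n : ℕ), ∀ v ∈ D n,
    R.L k (ι p v) = ι (p + 2 * k) (V.L k v)
      + (if (2 : ℤ) ∣ (p - (n : ℤ))
          then a + (p : ℂ) / 2 + (k : ℂ) * b + (n : ℂ) / 2
          else a + (p : ℂ) / 2 + (k : ℂ) * (b - 1 / 2) + (n : ℂ) / 2) •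
            ι (p + 2 * k) v
  actG : ∀ (k p : ℤ) (n : ℕ), ∀ v ∈ D n,
    R.G k (ι p v) = ι (p + 2 * k + 1) (V.G k v)
      + ((-1 : ℂ) ^ n *
          (if (2 : ℤ) ∣ (p - (n : ℤ)) then 1
            else a + (p : ℂ) / 2 + (2 * (k : ℂ) + 1) * (b - 1 / 2) + (n : ℂ) / 2)) •
            ι (p + 2 * k + 1) v

/-- `φ` is a shifted character at level `s = p/2` on the Verma module `M`
with grading `D` and highest weight vector `u`:  `φ u = 1` and `φ` satisfies
the defining recursions on homogeneous vectors (`w ∈ D n` means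
`L₀ w = (h + d) w` with `d = -n/2` and `w` of parity `n mod 2`; the operator
`G (-j)` is `G_{-r}` with `r = j - 1/2 > 0`). -/
def IsShiftedChar (a b : ℂ) {c : ℂ} (M : NSMod c)
    (D : ℕ → Submodule ℂ M.carrier) (u : M.carrier) (p : ℤ)
    (φ : M.carrier →ₗ[ℂ] ℂ) : Prop :=
  φ u = 1 ∧
    (∀ (n : ℕ), ∀ w ∈ D n, ∀ k : ℤ, 1 ≤ k →
      φ (M.L (-k) w)
        = (if (2 : ℤ) ∣ (p - (n : ℤ))
            then -(a + (p : ℂ) / 2 + (k : ℂ) - (k : ℂ) * b + (n : ℂ) / 2)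
            else -(a + (p : ℂ) / 2 + (k : ℂ) - (k : ℂ) * (b - 1 / 2) + (n : ℂ) / 2))
          * φ w) ∧
    (∀ (n : ℕ), ∀ w ∈ D n, ∀ j : ℤ, 1 ≤ j →
      φ (M.G (-j) w)
        = (if (2 : ℤ) ∣ (p - (n : ℤ))
            then -(-1 : ℂ) ^ n *
              (a + (p : ℂ) / 2 + ((j : ℂ) - 1 / 2)
                - 2 * ((j : ℂ) - 1 / 2) * (b - 1 / 2) + (n : ℂ) / 2)
            else -(-1 : ℂ) ^ n)
          * φ w)

/-!
For `(a, b) = (1/2, 1/2)` and `v ∈ V_{h+d}`, the vector `v ⊗ t^{d-1/2}` has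
`s + d = 2d - 1/2 ∈ ℤ + 1/2`, and the scalar corrections `a + s + k(b - 1/2) - d` and
`a + s + (2k+1)(b - 1/2) - d` both vanish. So `L_k` and `G_{k+1/2}` act on these vectors through
the factor `V` alone, and since they raise the `L₀`-eigenvalue by `k` and `k + 1/2`, the exponent
`d - 1/2` moves along with the weight. The weight spaces are the `L₀`-eigenspaces of an internal
direct sum, so `v ↦ v ⊗ t^{d-1/2}` is a well-defined injective homomorphism; its image is the span
in question, which is therefore a submodule.
-/

namespace Module.End

variable {K M ι : Type*} [Field K] [AddCommGroup M] [Module K M]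
  {f : End K M} {D : ι → Submodule K M} {eig : ι → K}

theorem eigenspace_eq_of_iSup_eq_top (hD : iSup D = ⊤) (heig : Function.Injective eig)
    (hDf : ∀ i, D i ≤ f.eigenspace (eig i)) (i : ι) : f.eigenspace (eig i) = D i := by
  set rest := ⨆ (j) (_ : j ≠ i), D j
  have hdisj : rest ⊓ f.eigenspace (eig i) = ⊥ := by
    refine eq_bot_iff.2 fun v hv => ?_
    refine (iSupIndep_def.1 (f.eigenspaces_iSupIndep.comp heig) i).le_bot ⟨hv.2, ?_⟩
    exact iSup₂_mono (fun j _ => hDf j) hv.1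
  calc f.eigenspace (eig i) = (D i ⊔ rest) ⊓ f.eigenspace (eig i) := by
        rw [← iSup_split_single, hD, top_inf_eq]
    _ = D i := by rw [sup_inf_assoc_of_le _ (hDf i), hdisj, sup_bot_eq]

theorem eigenspace_eq_bot_of_iSup_eq_top (hD : iSup D = ⊤)
    (hDf : ∀ i, D i ≤ f.eigenspace (eig i)) {μ : K} (hμ : ∀ i, eig i ≠ μ) :
    f.eigenspace μ = ⊥ := by
  have hle : ⊤ ≤ ⨆ (ν) (_ : ν ≠ μ), f.eigenspace ν :=
    hD ▸ iSup_le fun i => le_iSup₂_of_le (eig i) (hμ i) (hDf i)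
  simpa using (iSupIndep_def.1 f.eigenspaces_iSupIndep μ).mono_right hle

end Module.End

open Module.End

namespace DirectSum.IsInternal

variable {R ι M N : Type*} [Ring R] [DecidableEq ι] [AddCommGroup M] [Module R M]
  [AddCommGroup N] [Module R N] {D : ι → Submodule R M}

def lift (hD : IsInternal D) (g : ∀ i, D i →ₗ[R] N) : M →ₗ[R] N :=
  toModule R ι N g ∘ₗ (LinearEquiv.ofBijective (coeLinearMap D) hD).symm.toLinearMap

theorem lift_apply_of_mem (hD : IsInternal D) (g : ∀ i, D i →ₗ[R] N) {i : ι} {v : M}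
    (hv : v ∈ D i) : hD.lift g v = g i ⟨v, hv⟩ := by
  have hsymm : (LinearEquiv.ofBijective (coeLinearMap D) hD).symm v = lof R ι _ i ⟨v, hv⟩ := by
    rw [LinearEquiv.symm_apply_eq]
    exact (coeLinearMap_of D i ⟨v, hv⟩).symm
  rw [lift, LinearMap.comp_apply, LinearEquiv.coe_coe, hsymm, toModule_lof]

theorem linearMap_ext (hD : IsInternal D) {f g : M →ₗ[R] N}
    (h : ∀ i, ∀ v ∈ D i, f v = g v) : f = g :=
  LinearMap.eqLocus_eq_top.1 <| top_unique <|
    hD.submodule_iSup_eq_top ▸ iSup_le fun i v hv => h i v hv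

end DirectSum.IsInternal

section

variable {R ι κ M : Type*} [CommRing R] [DecidableEq ι] [AddCommGroup M] [Module R M]
  {D : ι → Submodule R M}

theorem DirectSum.IsInternal.lift_lsingle_injective (hD : DirectSum.IsInternal D) (σ : ι → κ) :
    Function.Injective (hD.lift fun i => Finsupp.lsingle (σ i) ∘ₗ (D i).subtype) := by
  have hinv : Finsupp.lsum R (fun _ => LinearMap.id) ∘ₗ
      hD.lift (fun i => Finsupp.lsingle (σ i) ∘ₗ (D i).subtype) = LinearMap.id :=
    hD.linearMap_ext fun i v hv => by simp [hD.lift_apply_of_mem _ hv]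
  exact Function.LeftInverse.injective (g := Finsupp.lsum R fun _ => LinearMap.id)
    (LinearMap.congr_fun hinv)

end

namespace NSMod

variable {c : ℂ} (V : NSMod c)

theorem L_mem_eigenspace_L0 (k : ℤ) {μ : ℂ} {v : V.carrier}
    (hv : v ∈ eigenspace (V.L 0) μ) : V.L k v ∈ eigenspace (V.L 0) (μ + k) := by
  rw [Module.End.mem_eigenspace_iff] at hv ⊢
  have hcomm := V.rel_LL 0 k v
  simp only [hv, map_smul, Int.cast_zero, sub_zero, zero_add, ne_eq, OfNat.ofNat_ne_zero,
    not_false_eq_true, zero_pow, zero_div, zero_mul, ite_self, zero_smul, add_zero] at hcomm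
  rw [add_smul, ← hcomm]
  abel

theorem G_mem_eigenspace_L0 (k : ℤ) {μ : ℂ} {v : V.carrier}
    (hv : v ∈ eigenspace (V.L 0) μ) : V.G k v ∈ eigenspace (V.L 0) (μ + k + 1 / 2) := by
  rw [Module.End.mem_eigenspace_iff] at hv ⊢
  have hcomm := V.rel_LG 0 k v
  simp only [hv, map_smul, Int.cast_zero, zero_div, sub_zero, zero_add] at hcomm
  rw [add_assoc, add_smul, ← hcomm]
  abel

end NSMod

section

variable {c h : ℂ} {V : NSMod c} {D : ℕ → Submodule ℂ V.carrier}

theorem eigenspace_L0_eq_weightSpace (hD : DirectSum.IsInternal D)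
    (heig : ∀ n : ℕ, ∀ v ∈ D n, V.L 0 v = (h - (n : ℂ) / 2) • v) (n : ℕ) :
    eigenspace (V.L 0) (h - (n : ℂ) / 2) = D n :=
  eigenspace_eq_of_iSup_eq_top (eig := fun n : ℕ => h - (n : ℂ) / 2) hD.submodule_iSup_eq_top
    (fun m n hmn => by simpa using hmn) (fun n v hv => mem_eigenspace_iff.2 (heig n v hv)) n

theorem eigenspace_L0_eq_bot (hD : DirectSum.IsInternal D)
    (heig : ∀ n : ℕ, ∀ v ∈ D n, V.L 0 v = (h - (n : ℂ) / 2) • v) {m : ℤ} (hm : m < 0) :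
    eigenspace (V.L 0) (h - (m : ℂ) / 2) = ⊥ :=
  eigenspace_eq_bot_of_iSup_eq_top hD.submodule_iSup_eq_top
    (fun n v hv => mem_eigenspace_iff.2 (heig n v hv)) fun n hn => by
      have : (n : ℤ) = m := by exact_mod_cast (by linear_combination -2 * hn : (n : ℂ) = m)
      omega

end

namespace ShiftedWitness

variable {c h : ℂ} {V : NSMod c} {D : ℕ → Submodule ℂ V.carrier} {Sh : PreNSMod}

section

variable {a b : ℂ} (sw : ShiftedWitness a b V D Sh)

def shiftedCopy (hD : DirectSum.IsInternal D) : V.carrier →ₗ[ℂ] Sh.carrier :=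
  Finsupp.lsum ℂ sw.ι ∘ₗ hD.lift fun n => Finsupp.lsingle (-(n : ℤ) - 1) ∘ₗ (D n).subtype

theorem shiftedCopy_apply_of_mem (hD : DirectSum.IsInternal D) {n : ℕ} {v : V.carrier}
    (hv : v ∈ D n) : sw.shiftedCopy hD v = sw.ι (-(n : ℤ) - 1) v := by
  simp [shiftedCopy, hD.lift_apply_of_mem _ hv]

theorem shiftedCopy_injective (hD : DirectSum.IsInternal D) :
    Function.Injective (sw.shiftedCopy hD) :=
  sw.directSum.injective.comp (hD.lift_lsingle_injective _)

theorem range_shiftedCopy (hD : DirectSum.IsInternal D) :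
    LinearMap.range (sw.shiftedCopy hD)
      = Submodule.span ℂ (⋃ n : ℕ, sw.ι (-(n : ℤ) - 1) '' (D n : Set V.carrier)) := by
  rw [Submodule.span_iUnion, LinearMap.range_eq_map, ← hD.submodule_iSup_eq_top,
    Submodule.map_iSup]
  refine iSup_congr fun n => ?_
  rw [Submodule.span_image, Submodule.span_eq]
  ext w
  simp only [Submodule.mem_map]
  exact exists_congr fun v => and_congr_right fun hv => by rw [sw.shiftedCopy_apply_of_mem hD hv]

theorem shiftedCopy_apply_of_mem_eigenspace (hD : DirectSum.IsInternal D)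
    (heig : ∀ n : ℕ, ∀ v ∈ D n, V.L 0 v = (h - (n : ℂ) / 2) • v) {m : ℤ} {v : V.carrier}
    (hv : v ∈ eigenspace (V.L 0) (h - (m : ℂ) / 2)) :
    sw.shiftedCopy hD v = sw.ι (-m - 1) v := by
  rcases lt_or_ge m 0 with hm | hm
  · rw [eigenspace_L0_eq_bot hD heig hm, Submodule.mem_bot] at hv
    simp [hv]
  · lift m to ℕ using hm
    rw [Int.cast_natCast, eigenspace_L0_eq_weightSpace hD heig] at hv
    exact sw.shiftedCopy_apply_of_mem hD hv

end

variable (sw : ShiftedWitness (1 / 2) (1 / 2) V D Sh)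

theorem L_ι_neg_sub_one (k : ℤ) {n : ℕ} {v : V.carrier} (hv : v ∈ D n) :
    Sh.L k (sw.ι (-(n : ℤ) - 1) v) = sw.ι (-(n : ℤ) - 1 + 2 * k) (V.L k v) := by
  have hcoeff : (1 : ℂ) / 2 + ((-(n : ℤ) - 1 : ℤ) : ℂ) / 2 + k * (1 / 2 - 1 / 2) + n / 2 = 0 := by
    push_cast; ring
  rw [sw.actL k _ n v hv, if_neg (by omega), hcoeff, zero_smul, add_zero]

theorem G_ι_neg_sub_one (k : ℤ) {n : ℕ} {v : V.carrier} (hv : v ∈ D n) :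
    Sh.G k (sw.ι (-(n : ℤ) - 1) v) = sw.ι (-(n : ℤ) - 1 + 2 * k + 1) (V.G k v) := by
  have hcoeff : (-1 : ℂ) ^ n * ((1 : ℂ) / 2 + ((-(n : ℤ) - 1 : ℤ) : ℂ) / 2
      + (2 * k + 1) * (1 / 2 - 1 / 2) + n / 2) = 0 := by
    push_cast; ring
  rw [sw.actG k _ n v hv, if_neg (by omega), hcoeff, zero_smul, add_zero]

theorem shiftedCopy_comp_L (hD : DirectSum.IsInternal D)
    (heig : ∀ n : ℕ, ∀ v ∈ D n, V.L 0 v = (h - (n : ℂ) / 2) • v) (k : ℤ) :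
    sw.shiftedCopy hD ∘ₗ V.L k = Sh.L k ∘ₗ sw.shiftedCopy hD :=
  hD.linearMap_ext fun n v hv => by
    have hLv := V.L_mem_eigenspace_L0 k (mem_eigenspace_iff.2 (heig n v hv))
    rw [show h - (n : ℂ) / 2 + k = h - ((n - 2 * k : ℤ) : ℂ) / 2 by push_cast; ring] at hLv
    simp only [LinearMap.comp_apply]
    rw [sw.shiftedCopy_apply_of_mem_eigenspace hD heig hLv, sw.shiftedCopy_apply_of_mem hD hv,
      sw.L_ι_neg_sub_one k hv]
    congr 2
    ring

theorem shiftedCopy_comp_G (hD : DirectSum.IsInternal D)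
    (heig : ∀ n : ℕ, ∀ v ∈ D n, V.L 0 v = (h - (n : ℂ) / 2) • v) (k : ℤ) :
    sw.shiftedCopy hD ∘ₗ V.G k = Sh.G k ∘ₗ sw.shiftedCopy hD :=
  hD.linearMap_ext fun n v hv => by
    have hGv := V.G_mem_eigenspace_L0 k (mem_eigenspace_iff.2 (heig n v hv))
    rw [show h - (n : ℂ) / 2 + k + 1 / 2 = h - ((n - 2 * k - 1 : ℤ) : ℂ) / 2 by
      push_cast; ring] at hGv
    simp only [LinearMap.comp_apply]
    rw [sw.shiftedCopy_apply_of_mem_eigenspace hD heig hGv, sw.shiftedCopy_apply_of_mem hD hv,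
      sw.G_ι_neg_sub_one k hv]
    congr 2
    ring

end ShiftedWitness

/-- for `(a,b) = (1/2,1/2)`, the subspace of the shifted
module `V ⊗ ℂ[t^{±1/2}]` spanned by the vectors `v ⊗ t^{d-1/2}` with
`v ∈ V_{h+d}` (i.e. `ι (-(n+1)) v` for `v ∈ D n`) is a submodule, and
`v ↦ v ⊗ t^{d-1/2}` is an isomorphism of Neveu–Schwarz modules from `V`
onto this submodule. -/
theorem shifted_copy_of_V (c h : ℂ)
    (V : NSMod c) (u : V.carrier) (D : ℕ → Submodule ℂ V.carrier)
    (hV : GradedHW h V u D)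
    (Sh : NSMod c) (sw : ShiftedWitness (1 / 2) (1 / 2) V D Sh.toPreNSMod) :
    Sh.IsSubmodule
      (Submodule.span ℂ
        (⋃ n : ℕ, sw.ι (-(n : ℤ) - 1) '' (D n : Set V.carrier))) ∧
    ∃ f : V.carrier →ₗ[ℂ] Sh.carrier,
      (∀ (n : ℕ), ∀ v ∈ D n, f v = sw.ι (-(n : ℤ) - 1) v) ∧
      Function.Injective f ∧
      LinearMap.range f
        = Submodule.span ℂ
            (⋃ n : ℕ, sw.ι (-(n : ℤ) - 1) '' (D n : Set V.carrier)) ∧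
      (∀ (k : ℤ) (v : V.carrier), f (V.L k v) = Sh.L k (f v)) ∧
      (∀ (k : ℤ) (v : V.carrier), f (V.G k v) = Sh.G k (f v)) := by
  have hL k v := LinearMap.congr_fun (sw.shiftedCopy_comp_L hV.internal hV.eig k) v
  have hG k v := LinearMap.congr_fun (sw.shiftedCopy_comp_G hV.internal hV.eig k) v
  rw [← sw.range_shiftedCopy hV.internal]
  refine ⟨⟨?_, ?_⟩, sw.shiftedCopy hV.internal, fun n v hv => sw.shiftedCopy_apply_of_mem _ hv,
    sw.shiftedCopy_injective _, rfl, hL, hG⟩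
  · rintro k _ ⟨v, rfl⟩
    exact ⟨V.L k v, hL k v⟩
  · rintro k _ ⟨v, rfl⟩
    exact ⟨V.G k v, hG k v⟩
end
end

section
/- Let a, b ∈ ℂ with 0 ≤ Re(a) < 1 and b ≠ 1, and let V be a simple highest weight module over the Neveu–Schwarz algebra with highest weight vector u of highest weight (c, h), decomposed as V = ⨁_{n ∈ ℕ} V_{h−n/2} as in the grading assumption. Then the only submodule of the reduced shifted module containing the images of u ⊗ t^m for all m ∈ Z is the whole reduced shifted module. -/
noncomputable section

open Submodule

/-!
Let `U ⊆ V` be the set of vectors `v` with `v ⊗ t^s` in `W` for every `s`. For `s ∈ ℤ`, acting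
with `G_{k+1/2}`, `k ∈ {0, 1}`, on `u ⊗ t^{s-k-1/2}` gives a multiple of `u ⊗ t^s`, and the two
multiples differ by `2(b - 1) ≠ 0`, so `u ∈ U`. The action formulas of the shifted module show
that `L_k v` and `G_{k+1/2} v` lie in `U` whenever `v ∈ U` is homogeneous, and they are again
homogeneous because the `V_{h-n/2}` are exactly the `L₀`-eigenspaces. The homogeneous vectors of
`U` therefore span a submodule of `V` containing `u`, which is all of `V`; hence `U = V`, and the
vectors `v ⊗ t^s` span the reduced shifted module.
-/

namespace DirectSum.IsInternal

variable {ι K M : Type*} [DecidableEq ι] [Field K] [AddCommGroup M] [Module K M]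
  {D : ι → Submodule K M} {f : Module.End K M} {χ : ι → K}

theorem eigenspace_eq_iSup (hD : IsInternal D) (hf : ∀ i, ∀ v ∈ D i, f v = χ i • v) (μ : K) :
    f.eigenspace μ = ⨆ (i) (_ : χ i = μ), D i := by
  have hle : ∀ i, D i ≤ f.eigenspace (χ i) := fun i v hv =>
    Module.End.mem_eigenspace_iff.mpr (hf i v hv)
  symm
  refine eq_of_le_of_inf_le_of_sup_le (z := ⨆ (i) (_ : ¬χ i = μ), D i) ?_ ?_ ?_
  · exact iSup₂_le fun i hi => hi ▸ hle i
  · have hdisj : Disjoint (f.eigenspace μ) (⨆ (i) (_ : ¬χ i = μ), D i) :=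
      (f.eigenspaces_iSupIndep μ).mono_right
        (iSup₂_le fun i hi => (hle i).trans (le_iSup₂ (f := fun ν _ => f.eigenspace ν) (χ i) hi))
    simp [hdisj.eq_bot]
  · rw [← iSup_split, hD.submodule_iSup_eq_top]
    exact le_top

theorem exists_eigenspace_le [Nonempty ι] (hD : IsInternal D) (hχ : Function.Injective χ)
    (hf : ∀ i, ∀ v ∈ D i, f v = χ i • v) (μ : K) : ∃ i, f.eigenspace μ ≤ D i := by
  rw [hD.eigenspace_eq_iSup hf]
  by_cases hμ : ∃ i, χ i = μ
  · obtain ⟨i, rfl⟩ := hμ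
    exact ⟨i, iSup₂_le fun j hj => hχ hj ▸ le_rfl⟩
  · exact ⟨Classical.arbitrary ι, iSup₂_le fun j hj => (hμ ⟨j, hj⟩).elim⟩

end DirectSum.IsInternal

namespace GradedHW

variable {c h : ℂ} {V : NSMod c} {u : V.carrier} {D : ℕ → Submodule ℂ V.carrier}

theorem exists_eigenspace_le (hV : GradedHW h V u D) (μ : ℂ) :
    ∃ m, Module.End.eigenspace (V.L 0) μ ≤ D m :=
  hV.internal.exists_eigenspace_le (χ := fun n : ℕ => h - (n : ℂ) / 2)
    (fun m n hmn => by simpa using hmn) hV.eig μ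

theorem exists_L_apply_mem (hV : GradedHW h V u D) (k : ℤ) {n : ℕ} {v : V.carrier}
    (hv : v ∈ D n) : ∃ m, V.L k v ∈ D m := by
  obtain ⟨m, hm⟩ := hV.exists_eigenspace_le (h - (n : ℂ) / 2 + k)
  refine ⟨m, hm (Module.End.mem_eigenspace_iff.mpr ?_)⟩
  have hcomm := V.rel_LL 0 k v
  simp only [hV.eig n v hv, map_smul, Int.cast_zero, zero_add, sub_zero, ne_eq,
    OfNat.ofNat_ne_zero, not_false_eq_true, zero_pow, zero_div, zero_mul, ite_self,
    zero_smul, add_zero] at hcomm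
  linear_combination (norm := module) hcomm

theorem exists_G_apply_mem (hV : GradedHW h V u D) (k : ℤ) {n : ℕ} {v : V.carrier}
    (hv : v ∈ D n) : ∃ m, V.G k v ∈ D m := by
  obtain ⟨m, hm⟩ := hV.exists_eigenspace_le (h - (n : ℂ) / 2 + k + 1 / 2)
  refine ⟨m, hm (Module.End.mem_eigenspace_iff.mpr ?_)⟩
  have hcomm := V.rel_LG 0 k v
  simp only [hV.eig n v hv, map_smul, Int.cast_zero, zero_div, sub_zero, zero_add] at hcomm
  linear_combination (norm := module) hcomm

theorem eq_top_of_homogeneous_closed (hV : GradedHW h V u D) (U : Submodule ℂ V.carrier)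
    (hu : u ∈ U) (hL : ∀ k n, ∀ v ∈ D n, v ∈ U → V.L k v ∈ U)
    (hG : ∀ k n, ∀ v ∈ D n, v ∈ U → V.G k v ∈ U) : U = ⊤ := by
  set X := ⨆ n, D n ⊓ U
  have hX : ∀ T : V.carrier →ₗ[ℂ] V.carrier, (∀ n, ∀ v ∈ D n, ∃ m, T v ∈ D m) →
      (∀ n, ∀ v ∈ D n, v ∈ U → T v ∈ U) → ∀ v ∈ X, T v ∈ X := by
    intro T hTD hTU v hv
    have hmap : X.map T ≤ X := by
      rw [Submodule.map_iSup]
      refine iSup_le fun n => Submodule.map_le_iff_le_comap.mpr ?_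
      rintro w ⟨hwD, hwU⟩
      obtain ⟨m, hm⟩ := hTD n w hwD
      exact Submodule.mem_iSup_of_mem m ⟨hm, hTU n w hwD hwU⟩
    exact hmap (Submodule.mem_map_of_mem hv)
  have hXtop : X = ⊤ := hV.hw.gen X
    ⟨fun k => hX _ (fun _ _ => hV.exists_L_apply_mem k) (hL k),
      fun k => hX _ (fun _ _ => hV.exists_G_apply_mem k) (hG k)⟩
    (Submodule.mem_iSup_of_mem 0 ⟨hV.u_mem, hu⟩)
  exact eq_top_iff.mpr (hXtop ▸ iSup_le fun n => inf_le_right)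

end GradedHW

namespace RedShiftedWitness

variable {a b c : ℂ} {V : NSMod c} {D : ℕ → Submodule ℂ V.carrier} {R : NSMod c}
  {W : Submodule ℂ R.carrier}

theorem iota_L_apply_mem (rsw : RedShiftedWitness a b V D R) (hW : R.IsSubmodule W) {n : ℕ}
    {v : V.carrier} (hv : v ∈ D n) (hvW : ∀ p, rsw.ι p v ∈ W) (k q : ℤ) :
    rsw.ι q (V.L k v) ∈ W := by
  have hact := rsw.actL k (q - 2 * k) n v hv
  rw [sub_add_cancel] at hact
  rw [eq_sub_of_add_eq hact.symm]
  exact W.sub_mem (hW.1 k _ (hvW _)) (W.smul_mem _ (hvW q))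

theorem iota_G_apply_mem (rsw : RedShiftedWitness a b V D R) (hW : R.IsSubmodule W) {n : ℕ}
    {v : V.carrier} (hv : v ∈ D n) (hvW : ∀ p, rsw.ι p v ∈ W) (k q : ℤ) :
    rsw.ι q (V.G k v) ∈ W := by
  have hact := rsw.actG k (q - 2 * k - 1) n v hv
  rw [show q - 2 * k - 1 + 2 * k + 1 = q by ring] at hact
  rw [eq_sub_of_add_eq hact.symm]
  exact W.sub_mem (hW.2 k _ (hvW _)) (W.smul_mem _ (hvW q))

theorem iota_mem_of_forall_odd {h : ℂ} {u : V.carrier} (rsw : RedShiftedWitness a b V D R)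
    (hb : b ≠ 1) (hV : GradedHW h V u D) (hW : R.IsSubmodule W)
    (hu : ∀ p : ℤ, Odd p → rsw.ι p u ∈ W) (p : ℤ) : rsw.ι p u ∈ W := by
  rcases Int.even_or_odd p with ⟨r, hr⟩ | hp
  · have hGu : ∀ k : ℤ, 0 ≤ k →
        (a + ((p : ℂ) - 2 * k - 1) / 2 + (2 * k + 1) * (b - 1 / 2)) • rsw.ι p u ∈ W := by
      intro k hk
      have hact := rsw.actG k (p - 2 * k - 1) 0 u hV.u_mem
      rw [show p - 2 * k - 1 + 2 * k + 1 = p by ring, hV.hw.hwG k hk, map_zero, zero_add,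
        if_neg (show ¬(2 : ℤ) ∣ p - 2 * k - 1 - ((0 : ℕ) : ℤ) by omega)] at hact
      convert hW.2 k _ (hu (p - 2 * k - 1) ⟨r - k - 1, by omega⟩) using 1
      rw [hact]
      congr 1
      push_cast
      ring
    -- the coefficients for `k = 1` and `k = 0` differ by `2 (b - 1)`
    by_cases h0 : a + ((p : ℂ) - 2 * ((0 : ℤ) : ℂ) - 1) / 2
        + (2 * ((0 : ℤ) : ℂ) + 1) * (b - 1 / 2) = 0
    · refine (Submodule.smul_mem_iff W fun h1 => hb ?_).mp (hGu 1 zero_le_one)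
      push_cast at h0 h1
      linear_combination (h1 - h0) / 2
    · exact (Submodule.smul_mem_iff W h0).mp (hGu 0 le_rfl)
  · exact hu p hp

theorem eq_top_of_forall_iota_mem (rsw : RedShiftedWitness a b V D R)
    (hW : ∀ p v, rsw.ι p v ∈ W) : W = ⊤ := by
  refine eq_top_iff.mpr fun r _ => ?_
  obtain ⟨f, rfl⟩ := rsw.surj r
  rw [Finsupp.lsum_apply]
  exact W.sum_mem fun p _ => hW p (f p)

end RedShiftedWitness

theorem reduced_shifted_generated_general (a b c h : ℂ)
    (hb : b ≠ 1)
    (V : NSMod c) (u : V.carrier) (D : ℕ → Submodule ℂ V.carrier)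
    (hV : GradedHW h V u D)
    (R : NSMod c) (rsw : RedShiftedWitness a b V D R)
    (W : Submodule ℂ R.carrier) (hW : R.IsSubmodule W)
    (hu : ∀ p : ℤ, Odd p → rsw.ι p u ∈ W) :
    W = ⊤ := by
  set U : Submodule ℂ V.carrier := ⨅ p, W.comap (rsw.ι p)
  have hmemU : ∀ v, v ∈ U ↔ ∀ p, rsw.ι p v ∈ W := fun v => by simp [U, Submodule.mem_iInf]
  have hU : U = ⊤ := hV.eq_top_of_homogeneous_closed U
    ((hmemU u).mpr (rsw.iota_mem_of_forall_odd hb hV hW hu))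
    (fun k _ v hv hvU => (hmemU _).mpr (rsw.iota_L_apply_mem hW hv ((hmemU v).mp hvU) k))
    (fun k _ v hv hvU => (hmemU _).mpr (rsw.iota_G_apply_mem hW hv ((hmemU v).mp hvU) k))
  exact rsw.eq_top_of_forall_iota_mem fun p v => (hmemU v).mp (hU ▸ Submodule.mem_top) p

/-- Lemma 3.3: for a simple highest weight module `V`,
the reduced shifted module is generated by the images of `u ⊗ t^m`
(`m ∈ ℤ + 1/2`, i.e. `ι p u` with `p` odd): the only submodule containing
all of them is the whole module. -/
theorem reduced_shifted_generated (a b c h : ℂ)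
    (ha0 : 0 ≤ a.re) (ha1 : a.re < 1) (hb : b ≠ 1)
    (V : NSMod c) (u : V.carrier) (D : ℕ → Submodule ℂ V.carrier)
    (hV : GradedHW h V u D) (hsimple : V.IsSimple)
    (R : NSMod c) (rsw : RedShiftedWitness a b V D R)
    (W : Submodule ℂ R.carrier) (hW : R.IsSubmodule W)
    (hu : ∀ p : ℤ, Odd p → rsw.ι p u ∈ W) :
    W = ⊤ :=
  reduced_shifted_generated_general a b c h hb V u D hV R rsw W hW hu
end
end

section
/- Let a, b ∈ ℂ with 0 ≤ Re(a) < 1 and b ≠ 1, and let V be a simple highest weight module over the Neveu–Schwarz algebra with highest weight vector u of highest weight (c, h), decomposed as V = ⨁_{n ∈ ℕ} V_{h−n/2} as in the grading assumption. Then for every s ∈ (1/2)ℤ with s > 0, the smallest submodule of the reduced shifted module containing the images of V ⊗ t^k for all k ∈ (1/2)ℤ with k > s equals the smallest submodule containing the images of u ⊗ t^k for all k ∈ (1/2)ℤ with k > s. -/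
noncomputable section

open Submodule

/-! If a submodule `W` of the reduced shifted module contains `u ⊗ t^k` for every `k > s`, then
the homogeneous vectors `v` with `v ⊗ t^k ∈ W` for every `k > s` form a subspace stable under the
lowering operators `L_{-n}` (`n ≥ 0`) and `G_{-r}` (`r > 0`): the action formulas express
`(L_{-n} v) ⊗ t^k` through `L_{-n} (v ⊗ t^{k+n})` and `v ⊗ t^k`, and similarly for `G_{-r}`, and all
exponents involved exceed `s`. A highest weight module is generated by its highest weight vector
under the lowering operators alone, so this subspace is all of `V`. -/

theorem GradedHW.eq_eigenspace {c h : ℂ} {V : NSMod c} {u : V.carrier}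
    {D : ℕ → Submodule ℂ V.carrier} (hV : GradedHW h V u D) (n : ℕ) :
    D n = Module.End.eigenspace (V.L 0) (h - n / 2) := by
  have hinj : Function.Injective fun m : ℕ => h - (m : ℂ) / 2 := fun m m' hm => by
    simpa using hm
  refine congrFun (((Module.End.eigenspaces_iSupIndep (V.L 0)).comp hinj).le_iff_eq_of_iSup_eq_top
    hV.internal.submodule_iSup_eq_top |>.mp fun m w hw => ?_) n
  exact Module.End.mem_eigenspace_iff.mpr (hV.eig m w hw)

theorem GradedHW.mem_of_L_zero_eq {c h : ℂ} {V : NSMod c} {u : V.carrier}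
    {D : ℕ → Submodule ℂ V.carrier} (hV : GradedHW h V u D) {m : ℕ} {w : V.carrier}
    (hw : V.L 0 w = (h - m / 2) • w) : w ∈ D m := by
  rw [hV.eq_eigenspace]
  exact Module.End.mem_eigenspace_iff.mpr hw

theorem GradedHW.L_neg_mem {c h : ℂ} {V : NSMod c} {u : V.carrier}
    {D : ℕ → Submodule ℂ V.carrier} (hV : GradedHW h V u D) {n : ℕ} {w : V.carrier}
    (hw : w ∈ D n) (j : ℕ) : V.L (-j) w ∈ D (n + 2 * j) := by
  refine hV.mem_of_L_zero_eq ?_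
  have hrel := V.rel_LL 0 (-j) w
  rw [hV.eig n w hw, map_smul, sub_eq_iff_eq_add] at hrel
  rw [hrel, zero_add, Int.cast_zero, zero_pow three_ne_zero, sub_zero, sub_self, zero_div,
    zero_mul, ite_self, zero_smul, add_zero]
  match_scalars
  ring

theorem GradedHW.G_neg_mem {c h : ℂ} {V : NSMod c} {u : V.carrier}
    {D : ℕ → Submodule ℂ V.carrier} (hV : GradedHW h V u D) {n : ℕ} {w : V.carrier}
    (hw : w ∈ D n) (j : ℕ) : V.G (-j - 1) w ∈ D (n + 2 * j + 1) := by
  refine hV.mem_of_L_zero_eq ?_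
  have hrel := V.rel_LG 0 (-j - 1) w
  rw [hV.eig n w hw, map_smul, sub_eq_iff_eq_add] at hrel
  rw [hrel, zero_add]
  match_scalars
  ring

namespace NSMod

variable {c : ℂ} (V : NSMod c)

def IsLoweringStable (P : Submodule ℂ V.carrier) : Prop :=
  (∀ j : ℕ, ∀ v ∈ P, V.L (-j) v ∈ P) ∧ ∀ j : ℕ, ∀ v ∈ P, V.G (-j - 1) v ∈ P

def raisingCore (P : Submodule ℂ V.carrier) : Submodule ℂ V.carrier :=
  P ⊓ (⨅ (m : ℤ) (_ : 1 ≤ m), P.comap (V.L m)) ⊓ ⨅ (k : ℤ) (_ : 0 ≤ k), P.comap (V.G k)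

variable {V}

theorem mem_raisingCore {P : Submodule ℂ V.carrier} {v : V.carrier} :
    v ∈ V.raisingCore P ↔
      v ∈ P ∧ (∀ m : ℤ, 1 ≤ m → V.L m v ∈ P) ∧ ∀ k : ℤ, 0 ≤ k → V.G k v ∈ P := by
  simp [raisingCore, and_assoc]

theorem IsLoweringStable.L_mem {P : Submodule ℂ V.carrier} (hP : V.IsLoweringStable P)
    {m : ℤ} (hm : m ≤ 0) {v : V.carrier} (hv : v ∈ P) : V.L m v ∈ P := by
  obtain ⟨j, rfl⟩ : ∃ j : ℕ, m = -j := ⟨(-m).toNat, by omega⟩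
  exact hP.1 j v hv

theorem IsLoweringStable.G_mem {P : Submodule ℂ V.carrier} (hP : V.IsLoweringStable P)
    {k : ℤ} (hk : k ≤ -1) {v : V.carrier} (hv : v ∈ P) : V.G k v ∈ P := by
  obtain ⟨j, rfl⟩ : ∃ j : ℕ, k = -j - 1 := ⟨(-k - 1).toNat, by omega⟩
  exact hP.2 j v hv

theorem isLoweringStable_sInf {S : Set (Submodule ℂ V.carrier)}
    (hS : ∀ P ∈ S, V.IsLoweringStable P) : V.IsLoweringStable (sInf S) :=
  ⟨fun j _ hv => Submodule.mem_sInf.mpr fun P hP =>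
      (hS P hP).1 j _ (Submodule.mem_sInf.mp hv P hP),
    fun j _ hv => Submodule.mem_sInf.mpr fun P hP =>
      (hS P hP).2 j _ (Submodule.mem_sInf.mp hv P hP)⟩

/-- The commutator of a raising and a lowering operator is a raising operator, a lowering
operator or a scalar. -/
theorem IsLoweringStable.raisingCore {P : Submodule ℂ V.carrier} (hP : V.IsLoweringStable P) :
    V.IsLoweringStable (V.raisingCore P) := by
  constructor
  · intro j v hv
    obtain ⟨hvP, hvL, hvG⟩ := mem_raisingCore.mp hv
    refine mem_raisingCore.mpr ⟨hP.1 j v hvP, fun m hm => ?_, fun k hk => ?_⟩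
    · rw [eq_add_of_sub_eq (V.rel_LL m (-j) v)]
      refine P.add_mem (P.add_mem (P.smul_mem _ ?_) (P.smul_mem _ hvP)) (hP.1 j _ (hvL m hm))
      rcases le_or_gt (m + -j) 0 with hle | hgt
      · exact hP.L_mem hle hvP
      · exact hvL _ hgt
    · rw [eq_sub_of_add_eq' (eq_add_of_sub_eq (V.rel_LG (-j) k v)).symm]
      refine P.sub_mem (hP.1 j _ (hvG k hk)) (P.smul_mem _ ?_)
      rcases le_or_gt 0 (-j + k) with hle | hgt
      · exact hvG _ hle
      · exact hP.G_mem (by omega) hvP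
  · intro j v hv
    obtain ⟨hvP, hvL, hvG⟩ := mem_raisingCore.mp hv
    refine mem_raisingCore.mpr ⟨hP.2 j v hvP, fun m hm => ?_, fun k hk => ?_⟩
    · rw [eq_add_of_sub_eq (V.rel_LG m (-j - 1) v)]
      refine P.add_mem (P.smul_mem _ ?_) (hP.2 j _ (hvL m hm))
      rcases le_or_gt 0 (m + (-j - 1)) with hle | hgt
      · exact hvG _ hle
      · exact hP.G_mem (by omega) hvP
    · rw [eq_sub_of_add_eq (V.rel_GG k (-j - 1) v)]
      refine P.sub_mem (P.sub_mem (P.smul_mem _ ?_) (P.smul_mem _ hvP)) (hP.2 j _ (hvG k hk))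
      rcases le_or_gt (k + (-j - 1) + 1) 0 with hle | hgt
      · exact hP.L_mem hle hvP
      · exact hvL _ hgt

end NSMod

/-- The smallest lowering-stable subspace `N` containing `u` satisfies `N ≤ raisingCore N`,
so it is a submodule and hence everything. -/
theorem IsHW.eq_top_of_isLoweringStable {c h : ℂ} {V : NSMod c} {u : V.carrier}
    (hu : IsHW h V u) {P : Submodule ℂ V.carrier} (hP : V.IsLoweringStable P) (huP : u ∈ P) :
    P = ⊤ := by
  set S := {Q : Submodule ℂ V.carrier | u ∈ Q ∧ V.IsLoweringStable Q}
  have hN : V.IsLoweringStable (sInf S) := NSMod.isLoweringStable_sInf fun Q hQ => hQ.2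
  have huN : u ∈ sInf S := Submodule.mem_sInf.mpr fun Q hQ => hQ.1
  have hNcore : sInf S ≤ V.raisingCore (sInf S) := by
    refine sInf_le ⟨NSMod.mem_raisingCore.mpr ⟨huN, fun m hm => ?_, fun k hk => ?_⟩,
      hN.raisingCore⟩
    · rw [hu.hwL m hm]; exact zero_mem _
    · rw [hu.hwG k hk]; exact zero_mem _
  have hsub : V.IsSubmodule (sInf S) := by
    constructor
    · intro m v hv
      rcases le_or_gt m 0 with hle | hgt
      · exact hN.L_mem hle hv
      · exact (NSMod.mem_raisingCore.mp (hNcore hv)).2.1 m hgt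
    · intro k v hv
      rcases le_or_gt k (-1) with hle | hgt
      · exact hN.G_mem hle hv
      · exact (NSMod.mem_raisingCore.mp (hNcore hv)).2.2 k (by omega)
  exact top_unique ((hu.gen _ hsub huN).ge.trans (sInf_le ⟨huP, hP⟩))

namespace RedShiftedWitness

variable {a b c : ℂ} {V : NSMod c} {D : ℕ → Submodule ℂ V.carrier} {R : NSMod c}
  (rsw : RedShiftedWitness a b V D R) {W : Submodule ℂ R.carrier} {p₀ : ℤ}

theorem ι_L_neg_mem (hW : R.IsSubmodule W) {n : ℕ} {w : V.carrier} (hw : w ∈ D n)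
    (hwW : ∀ q, p₀ < q → rsw.ι q w ∈ W) (j : ℕ) {q : ℤ} (hq : p₀ < q) :
    rsw.ι q (V.L (-j) w) ∈ W := by
  have hact := rsw.actL (-j) (q + 2 * j) n w hw
  rw [show q + 2 * j + 2 * -(j : ℤ) = q by ring] at hact
  rw [eq_sub_of_add_eq hact.symm]
  exact W.sub_mem (hW.1 _ _ (hwW _ (by omega))) (W.smul_mem _ (hwW q hq))

theorem ι_G_neg_mem (hW : R.IsSubmodule W) {n : ℕ} {w : V.carrier} (hw : w ∈ D n)
    (hwW : ∀ q, p₀ < q → rsw.ι q w ∈ W) (j : ℕ) {q : ℤ} (hq : p₀ < q) :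
    rsw.ι q (V.G (-j - 1) w) ∈ W := by
  have hact := rsw.actG (-j - 1) (q + 2 * j + 1) n w hw
  rw [show q + 2 * j + 1 + 2 * (-(j : ℤ) - 1) + 1 = q by ring] at hact
  rw [eq_sub_of_add_eq hact.symm]
  exact W.sub_mem (hW.2 _ _ (hwW _ (by omega))) (W.smul_mem _ (hwW q hq))

def tailPreimage (W : Submodule ℂ R.carrier) (p₀ : ℤ) : Submodule ℂ V.carrier :=
  ⨅ (q : ℤ) (_ : p₀ < q), W.comap (rsw.ι q)

theorem mem_tailPreimage {v : V.carrier} :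
    v ∈ rsw.tailPreimage W p₀ ↔ ∀ q, p₀ < q → rsw.ι q v ∈ W := by
  simp [tailPreimage]

/-- The action formulas only apply to homogeneous vectors, so we pass to the homogeneous part
`T` of the tail preimage; lowering operators keep homogeneous vectors homogeneous. -/
theorem tailPreimage_eq_top {h : ℂ} {u : V.carrier} (hV : GradedHW h V u D)
    (hW : R.IsSubmodule W) (hWu : ∀ p, p₀ < p → rsw.ι p u ∈ W) :
    rsw.tailPreimage W p₀ = ⊤ := by
  set T := ⨆ n, D n ⊓ rsw.tailPreimage W p₀
  have hmapsTo : ∀ f : V.carrier →ₗ[ℂ] V.carrier,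
      (∀ n, ∀ w ∈ D n ⊓ rsw.tailPreimage W p₀, f w ∈ T) → ∀ v ∈ T, f v ∈ T := by
    intro f hf v hv
    refine (iSup_le fun n w hw => ?_ : T ≤ T.comap f) hv
    exact hf n w hw
  have hT : V.IsLoweringStable T := by
    constructor
    · refine fun j => hmapsTo _ fun n w ⟨hwD, hwX⟩ => Submodule.mem_iSup_of_mem (n + 2 * j)
        ⟨hV.L_neg_mem hwD j, rsw.mem_tailPreimage.mpr fun q hq =>
          rsw.ι_L_neg_mem hW hwD (rsw.mem_tailPreimage.mp hwX) j hq⟩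
    · refine fun j => hmapsTo _ fun n w ⟨hwD, hwX⟩ => Submodule.mem_iSup_of_mem (n + 2 * j + 1)
        ⟨hV.G_neg_mem hwD j, rsw.mem_tailPreimage.mpr fun q hq =>
          rsw.ι_G_neg_mem hW hwD (rsw.mem_tailPreimage.mp hwX) j hq⟩
  have huT : u ∈ T := Submodule.mem_iSup_of_mem 0 ⟨hV.u_mem, rsw.mem_tailPreimage.mpr hWu⟩
  exact top_unique ((hV.hw.eq_top_of_isLoweringStable hT huT).ge.trans
    (iSup_le fun _ => inf_le_right))

end RedShiftedWitness

theorem reduced_shifted_tail_generators_general (a b c h : ℂ)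
    (V : NSMod c) (u : V.carrier) (D : ℕ → Submodule ℂ V.carrier)
    (hV : GradedHW h V u D)
    (R : NSMod c) (rsw : RedShiftedWitness a b V D R)
    (p₀ : ℤ) :
    sInf {W : Submodule ℂ R.carrier | R.IsSubmodule W ∧
        ∀ p : ℤ, p₀ < p → ∀ v : V.carrier, rsw.ι p v ∈ W}
      = sInf {W : Submodule ℂ R.carrier | R.IsSubmodule W ∧
          ∀ p : ℤ, p₀ < p → rsw.ι p u ∈ W} := by
  congr 1
  ext W
  refine ⟨fun ⟨hW, hWV⟩ => ⟨hW, fun p hp => hWV p hp u⟩, fun ⟨hW, hWu⟩ => ⟨hW, fun p hp v => ?_⟩⟩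
  exact rsw.mem_tailPreimage.mp (rsw.tailPreimage_eq_top hV hW hWu ▸ Submodule.mem_top) p hp

/-- Corollary 3.5: for `0 < s ∈ (1/2)ℤ` (recorded as
`s = p₀/2`), the smallest submodule of the reduced shifted module containing
the images of `V ⊗ t^k` for all `k > s` coincides with the smallest
submodule containing the images of `u ⊗ t^k` for all `k > s`. -/
theorem reduced_shifted_tail_generators (a b c h : ℂ)
    (ha0 : 0 ≤ a.re) (ha1 : a.re < 1) (hb : b ≠ 1)
    (V : NSMod c) (u : V.carrier) (D : ℕ → Submodule ℂ V.carrier)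
    (hV : GradedHW h V u D) (hsimple : V.IsSimple)
    (R : NSMod c) (rsw : RedShiftedWitness a b V D R)
    (p₀ : ℤ) (hp₀ : 0 < p₀) :
    sInf {W : Submodule ℂ R.carrier | R.IsSubmodule W ∧
        ∀ p : ℤ, p₀ < p → ∀ v : V.carrier, rsw.ι p v ∈ W}
      = sInf {W : Submodule ℂ R.carrier | R.IsSubmodule W ∧
          ∀ p : ℤ, p₀ < p → rsw.ι p u ∈ W} :=
  reduced_shifted_tail_generators_general a b c h V u D hV R rsw p₀
end
end

section
/- Let a, b ∈ ℂ with 0 ≤ Re(a) < 1 and b ≠ 1. Let M = M(c, h) be the Verma module with highest weight vector u, decomposed as M = ⨁_{n ∈ ℕ} M_{h−n/2} into L₀-eigenspaces (even for n even, odd for n odd). Let J be a submodule of M with u ∉ J, let V = M/J with the induced Neveu–Schwarz module structure, highest weight vector ū = u + J, and the induced decomposition V_{h−n/2} = image of M_{h−n/2}. Fix s ∈ (1/2)ℤ with s > 0 and suppose φ_s : M → ℂ is a shifted character at level s. If W is a submodule of the reduced shifted module of V containing the images of ū ⊗ t^k for all k ∈ (1/2)ℤ with k > s, then for every w ∈ M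 the image of (w + J) ⊗ t^s − φ_s(w)·(ū ⊗ t^s) lies in W. -/
/-!
Work with the PBW basis of `M`. If `w` is homogeneous and `w̄ ⊗ t^q ∈ W` for all `q > s`, then
applying `L_{-k}` (resp. `G_{-r}`) to `w̄ ⊗ t^{s+k} ∈ W` (resp. `w̄ ⊗ t^{s+r} ∈ W`) shows that
`L_{-k} w̄ ⊗ t^s` (resp. `G_{-r} w̄ ⊗ t^s`) is congruent modulo `W` to a scalar multiple of
`w̄ ⊗ t^s`, and the recursion defining a shifted character is exactly that scalar with the
opposite sign. So the congruences `w̄ ⊗ t^s ≡ φ_s(w) ū ⊗ t^s` and `w̄ ⊗ t^q ∈ W` (`q > s`)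
pass from `u` to every PBW monomial, and these span `M`.
-/

noncomputable section

open Submodule

namespace GradedHW

variable {c h : ℂ} {V : NSMod c} {u : V.carrier} {D : ℕ → Submodule ℂ V.carrier}

theorem eq_eigenspace_s15 (hD : GradedHW h V u D) (n : ℕ) :
    D n = Module.End.eigenspace (V.L 0) (h - (n : ℂ) / 2) := by
  have hinj : Function.Injective fun n : ℕ => h - (n : ℂ) / 2 := by
    intro m n hmn
    exact_mod_cast (by linear_combination (-2 : ℂ) * hmn : (m : ℂ) = n)
  have hle : D ≤ fun n : ℕ => Module.End.eigenspace (V.L 0) (h - (n : ℂ) / 2) := fun n v hv =>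
    Module.End.mem_eigenspace_iff.mpr (hD.eig n v hv)
  exact congrFun (((Module.End.eigenspaces_iSupIndep (V.L 0)).comp hinj).le_iff_eq_of_iSup_eq_top
    hD.internal.submodule_iSup_eq_top |>.mp hle) n

theorem L_neg_mem_s15 (hD : GradedHW h V u D) {n : ℕ} {v : V.carrier} (hv : v ∈ D n) (k : ℕ) :
    V.L (-k) v ∈ D (n + 2 * k) := by
  rw [hD.eq_eigenspace_s15, Module.End.mem_eigenspace_iff]
  have hrel := V.rel_LL 0 (-k) v
  rw [zero_add, hD.eig n v hv, map_smul, sub_eq_iff_eq_add] at hrel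
  split_ifs at hrel <;> rw [hrel] <;> push_cast <;> module

theorem G_neg_mem_s15 (hD : GradedHW h V u D) {n : ℕ} {v : V.carrier} (hv : v ∈ D n) (k : ℕ) :
    V.G (-(k + 1)) v ∈ D (n + (2 * k + 1)) := by
  rw [hD.eq_eigenspace_s15, Module.End.mem_eigenspace_iff]
  have hrel := V.rel_LG 0 (-(k + 1)) v
  rw [zero_add, hD.eig n v hv, map_smul, sub_eq_iff_eq_add] at hrel
  rw [hrel]
  push_cast
  module

end GradedHW

section ShiftedCongruent

variable {a b c h : ℂ} {M V R : NSMod c} (u : M.carrier) {MD : ℕ → Submodule ℂ M.carrier}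
  {π : M.carrier →ₗ[ℂ] V.carrier} (rsw : RedShiftedWitness a b V (fun n => (MD n).map π) R)
  (p : ℤ) (φ : M.carrier →ₗ[ℂ] ℂ) (W : Submodule ℂ R.carrier)

def ShiftedCongruent (w : M.carrier) : Prop :=
  (∃ n, w ∈ MD n) ∧ (∀ q, p < q → rsw.ι q (π w) ∈ W) ∧
    rsw.ι p (π w) - φ w • rsw.ι p (π u) ∈ W

variable {u rsw p φ W}

theorem shiftedCongruent_self (hu : u ∈ MD 0) (hφu : φ u = 1)
    (hgen : ∀ q, p < q → rsw.ι q (π u) ∈ W) : ShiftedCongruent u rsw p φ W u :=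
  ⟨⟨0, hu⟩, hgen, by simp [hφu]⟩

theorem ShiftedCongruent.of_action {w w' : M.carrier} (hw : ShiftedCongruent u rsw p φ W w)
    {n' : ℕ} (hw' : w' ∈ MD n') (C : ℤ → ℂ)
    (hact : ∀ q, p ≤ q → rsw.ι q (π w') + C q • rsw.ι q (π w) ∈ W)
    (hφw' : φ w' = -(C p * φ w)) : ShiftedCongruent u rsw p φ W w' := by
  obtain ⟨-, htail, hcong⟩ := hw
  refine ⟨⟨n', hw'⟩, fun q hq => ?_, ?_⟩
  · exact (W.add_mem_iff_left (W.smul_mem _ (htail q hq))).mp (hact q hq.le)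
  · have hsplit : rsw.ι p (π w') - φ w' • rsw.ι p (π u) =
        (rsw.ι p (π w') + C p • rsw.ι p (π w)) - C p • (rsw.ι p (π w) - φ w • rsw.ι p (π u)) := by
      rw [hφw']
      module
    rw [hsplit]
    exact W.sub_mem (hact p le_rfl) (W.smul_mem _ hcong)

theorem ShiftedCongruent.L_neg (hMD : GradedHW h M u MD)
    (hπL : ∀ (m : ℤ) (w : M.carrier), π (M.L m w) = V.L m (π w)) (hW : R.IsSubmodule W)
    (hφ : IsShiftedChar a b M MD u p φ) {w : M.carrier} (hw : ShiftedCongruent u rsw p φ W w)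
    {j : ℤ} (hj : 1 ≤ j) : ShiftedCongruent u rsw p φ W (M.L (-j) w) := by
  obtain ⟨⟨n, hn⟩, htail, -⟩ := id hw
  lift j to ℕ using (by omega)
  refine hw.of_action (hMD.L_neg_mem_s15 hn j)
    (fun q => if (2 : ℤ) ∣ (q + 2 * j - n)
      then a + ((q + 2 * j : ℤ) : ℂ) / 2 + ((-j : ℤ) : ℂ) * b + n / 2
      else a + ((q + 2 * j : ℤ) : ℂ) / 2 + ((-j : ℤ) : ℂ) * (b - 1 / 2) + n / 2)
    (fun q hq => ?_) ?_
  · have hact := rsw.actL (-j) (q + 2 * j) n (π w) (Submodule.mem_map_of_mem hn)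
    rw [show q + 2 * j + 2 * -(j : ℤ) = q by ring, ← hπL] at hact
    exact hact ▸ hW.1 _ _ (htail _ (by omega))
  · rw [hφ.2.1 n w hn j hj]
    split_ifs <;> first | omega | (push_cast; ring)

theorem ShiftedCongruent.G_neg (hMD : GradedHW h M u MD)
    (hπG : ∀ (k : ℤ) (w : M.carrier), π (M.G k w) = V.G k (π w)) (hW : R.IsSubmodule W)
    (hφ : IsShiftedChar a b M MD u p φ) {w : M.carrier} (hw : ShiftedCongruent u rsw p φ W w)
    {j : ℤ} (hj : 1 ≤ j) : ShiftedCongruent u rsw p φ W (M.G (-j) w) := by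
  obtain ⟨⟨n, hn⟩, htail, -⟩ := id hw
  obtain ⟨k, rfl⟩ : ∃ k : ℕ, j = k + 1 := ⟨(j - 1).toNat, by omega⟩
  refine hw.of_action (hMD.G_neg_mem_s15 hn k)
    (fun q => (-1 : ℂ) ^ n * (if (2 : ℤ) ∣ (q + 2 * (k + 1) - 1 - n) then 1
      else a + ((q + 2 * (k + 1) - 1 : ℤ) : ℂ) / 2
        + (2 * ((-(k + 1) : ℤ) : ℂ) + 1) * (b - 1 / 2) + n / 2))
    (fun q hq => ?_) ?_
  · have hact := rsw.actG (-(k + 1)) (q + 2 * (k + 1) - 1) n (π w) (Submodule.mem_map_of_mem hn)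
    rw [show q + 2 * ((k : ℤ) + 1) - 1 + 2 * -((k : ℤ) + 1) + 1 = q by ring, ← hπG] at hact
    exact hact ▸ hW.2 _ _ (htail _ (by omega))
  · rw [hφ.2.2 n w hn (k + 1) hj]
    split_ifs <;> first | omega | (push_cast; ring)

theorem ShiftedCongruent.foldr_L_neg (hMD : GradedHW h M u MD)
    (hπL : ∀ (m : ℤ) (w : M.carrier), π (M.L m w) = V.L m (π w)) (hW : R.IsSubmodule W)
    (hφ : IsShiftedChar a b M MD u p φ) {w : M.carrier} (hw : ShiftedCongruent u rsw p φ W w)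
    {l : List ℤ} (hl : ∀ j ∈ l, 1 ≤ j) :
    ShiftedCongruent u rsw p φ W ((l.map fun j => M.L (-j)).foldr (fun f v => f v) w) := by
  induction l with
  | nil => exact hw
  | cons j l ih =>
    exact (ih fun i hi => hl i (List.mem_cons_of_mem j hi)).L_neg hMD hπL hW hφ
      (hl j List.mem_cons_self)

theorem ShiftedCongruent.foldr_G_neg (hMD : GradedHW h M u MD)
    (hπG : ∀ (k : ℤ) (w : M.carrier), π (M.G k w) = V.G k (π w)) (hW : R.IsSubmodule W)
    (hφ : IsShiftedChar a b M MD u p φ) {w : M.carrier} (hw : ShiftedCongruent u rsw p φ W w)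
    {l : List ℤ} (hl : ∀ j ∈ l, 1 ≤ j) :
    ShiftedCongruent u rsw p φ W ((l.map fun j => M.G (-j)).foldr (fun f v => f v) w) := by
  induction l with
  | nil => exact hw
  | cons j l ih =>
    exact (ih fun i hi => hl i (List.mem_cons_of_mem j hi)).G_neg hMD hπG hW hφ
      (hl j List.mem_cons_self)

theorem shiftedCongruent_vermaMonomial (hMD : GradedHW h M u MD)
    (hπL : ∀ (m : ℤ) (w : M.carrier), π (M.L m w) = V.L m (π w))
    (hπG : ∀ (k : ℤ) (w : M.carrier), π (M.G k w) = V.G k (π w)) (hW : R.IsSubmodule W)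
    (hφ : IsShiftedChar a b M MD u p φ) (hgen : ∀ q, p < q → rsw.ι q (π u) ∈ W)
    (i : VermaIndex) : ShiftedCongruent u rsw p φ W (vermaMonomial M u i.1) :=
  have hu := shiftedCongruent_self hMD.u_mem hφ.1 hgen
  (hu.foldr_G_neg hMD hπG hW hφ i.2.2.2.2).foldr_L_neg hMD hπL hW hφ i.2.2.1

end ShiftedCongruent

theorem shifted_character_congruence_general (a b c h : ℂ)
    (M : NSMod c) (u : M.carrier) (MD : ℕ → Submodule ℂ M.carrier)
    (hM : IsVerma h M u) (hMD : GradedHW h M u MD)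
    (V : NSMod c) (π : M.carrier →ₗ[ℂ] V.carrier)
    (hπL : ∀ (m : ℤ) (w : M.carrier), π (M.L m w) = V.L m (π w))
    (hπG : ∀ (k : ℤ) (w : M.carrier), π (M.G k w) = V.G k (π w))
    (R : NSMod c) (rsw : RedShiftedWitness a b V (fun n => (MD n).map π) R)
    (p : ℤ)
    (φ : M.carrier →ₗ[ℂ] ℂ) (hφ : IsShiftedChar a b M MD u p φ)
    (W : Submodule ℂ R.carrier) (hW : R.IsSubmodule W)
    (hgen : ∀ q : ℤ, p < q → rsw.ι q (π u) ∈ W) :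
    ∀ w : M.carrier, rsw.ι p (π w) - φ w • rsw.ι p (π u) ∈ W := by
  intro w
  let F : M.carrier →ₗ[ℂ] R.carrier :=
    rsw.ι p ∘ₗ π - LinearMap.toSpanSingleton ℂ R.carrier (rsw.ι p (π u)) ∘ₗ φ
  have hmonomials : span ℂ (Set.range fun i : VermaIndex => vermaMonomial M u i.1) ≤ W.comap F :=
    span_le.mpr <| Set.range_subset_iff.mpr fun i =>
      (shiftedCongruent_vermaMonomial hMD hπL hπG hW hφ hgen i).2.2
  simpa [F] using hmonomials (hM.2.2 ▸ mem_top : w ∈ _)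

/-- Lemma 3.6: let `V = M/J` be a quotient of the Verma
module `M = M(c,h)` (with `u ∉ J`), with quotient map `π` and induced grading
`n ↦ (MD n).map π`, and let `φ` be a shifted character at level `s = p/2 > 0`.
If a submodule `W` of the reduced shifted module of `V` contains the images
of `ū ⊗ t^k` for all `k > s`, then for every `w ∈ M` the element
`(w + J) ⊗ t^s − φ(w)·(ū ⊗ t^s)` lies in `W`. -/
theorem shifted_character_congruence (a b c h : ℂ)
    (ha0 : 0 ≤ a.re) (ha1 : a.re < 1) (hb : b ≠ 1)
    (M : NSMod c) (u : M.carrier) (MD : ℕ → Submodule ℂ M.carrier)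
    (hM : IsVerma h M u) (hMD : GradedHW h M u MD)
    (J : Submodule ℂ M.carrier) (hJ : M.IsSubmodule J) (huJ : u ∉ J)
    (V : NSMod c) (π : M.carrier →ₗ[ℂ] V.carrier)
    (hπL : ∀ (m : ℤ) (w : M.carrier), π (M.L m w) = V.L m (π w))
    (hπG : ∀ (k : ℤ) (w : M.carrier), π (M.G k w) = V.G k (π w))
    (hπsurj : Function.Surjective π) (hπker : LinearMap.ker π = J)
    (hπeven : V.even = M.even.map π) (hπodd : V.odd = M.odd.map π)
    (R : NSMod c) (rsw : RedShiftedWitness a b V (fun n => (MD n).map π) R)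
    (p : ℤ) (hp : 0 < p)
    (φ : M.carrier →ₗ[ℂ] ℂ) (hφ : IsShiftedChar a b M MD u p φ)
    (W : Submodule ℂ R.carrier) (hW : R.IsSubmodule W)
    (hgen : ∀ q : ℤ, p < q → rsw.ι q (π u) ∈ W) :
    ∀ w : M.carrier, rsw.ι p (π w) - φ w • rsw.ι p (π u) ∈ W :=
  shifted_character_congruence_general a b c h M u MD hM hMD V π hπL hπG R rsw p φ hφ W hW hgen
end
end
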